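/- arXiv:1308.5412 — 5 statements merged into one kernel-verified Lean document; each statement's English description precedes it below -/
import Mathlib

section
/- In any complex normed space (X, ‖·‖), the product ⟨·|·⟩ satisfies, for all x, y ∈ X and all r ∈ ℝ: (a) ⟨x|y⟩ = conj(⟨y|x⟩); (b) ⟨x|x⟩ is a nonnegative real number, and ⟨x|x⟩ = 0 only for x = 0; (c) ⟨r·x|y⟩ = r·⟨x|y⟩; (d) ⟨(r·i)·x|y⟩ = r·i·⟨x|y⟩; (e) ‖x‖ = √(⟨x|x⟩), i.e. ⟨x|x⟩ = ‖x‖². -/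
/-- The continuous product `⟨x|y⟩` in a complex normed space. -/
noncomputable def cprod {X : Type*} [NormedAddCommGroup X] [NormedSpace ℂ X] (x y : X) : ℂ :=
  open scoped Classical in
  if x = 0 ∨ y = 0 then 0
  else
    ((‖x‖ * ‖y‖ : ℝ) : ℂ) * (1 / 4 : ℂ) *
      (((‖((‖x‖⁻¹ : ℝ) : ℂ) • x + ((‖y‖⁻¹ : ℝ) : ℂ) • y‖ ^ 2
          - ‖((‖x‖⁻¹ : ℝ) : ℂ) • x - ((‖y‖⁻¹ : ℝ) : ℂ) • y‖ ^ 2 : ℝ) : ℂ)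
        + Complex.I *
          ((‖((‖x‖⁻¹ : ℝ) : ℂ) • x + Complex.I • (((‖y‖⁻¹ : ℝ) : ℂ) • y)‖ ^ 2
            - ‖((‖x‖⁻¹ : ℝ) : ℂ) • x - Complex.I • (((‖y‖⁻¹ : ℝ) : ℂ) • y)‖ ^ 2 : ℝ) : ℂ))

namespace CprodAux

variable {X : Type*} [NormedAddCommGroup X] [NormedSpace ℂ X]

/-- polarization expression -/
noncomputable def q (a b : X) : ℂ :=
  (1 / 4 : ℂ) * (((‖a + b‖ ^ 2 - ‖a - b‖ ^ 2 : ℝ) : ℂ)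
    + Complex.I * ((‖a + Complex.I • b‖ ^ 2 - ‖a - Complex.I • b‖ ^ 2 : ℝ) : ℂ))

/-- normalized vector -/
noncomputable def nu (x : X) : X := ((‖x‖⁻¹ : ℝ) : ℂ) • x

lemma cprod_eq {x y : X} (hx : x ≠ 0) (hy : y ≠ 0) :
    cprod x y = ((‖x‖ * ‖y‖ : ℝ) : ℂ) * q (nu x) (nu y) := by
  simp only [cprod, q, nu, hx, hy, or_self, if_neg, not_or, ne_eq, not_false_eq_true, and_self,
    if_false]
  ring

lemma norm_I_smul (v : X) : ‖Complex.I • v‖ = ‖v‖ := by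
  rw [norm_smul, Complex.norm_I, one_mul]

lemma q_conj (a b : X) : q b a = starRingEnd ℂ (q a b) := by
  have h1 : ‖b + a‖ = ‖a + b‖ := by rw [add_comm]
  have h2 : ‖b - a‖ = ‖a - b‖ := norm_sub_rev b a
  have e3 : Complex.I • (a - Complex.I • b) = b + Complex.I • a := by
    rw [smul_sub, smul_smul, Complex.I_mul_I, neg_one_smul, sub_neg_eq_add]; abel
  have h3 : ‖b + Complex.I • a‖ = ‖a - Complex.I • b‖ := by
    rw [← e3, norm_I_smul]
  have e4 : Complex.I • (a + Complex.I • b) = -(b - Complex.I • a) := by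
    rw [smul_add, smul_smul, Complex.I_mul_I, neg_one_smul]; abel
  have h4 : ‖b - Complex.I • a‖ = ‖a + Complex.I • b‖ := by
    rw [← norm_I_smul (a + Complex.I • b), e4, norm_neg]
  simp only [q, h1, h2, h3, h4, map_mul, map_add, map_sub, Complex.conj_ofReal, map_div₀,
    map_one, map_ofNat, Complex.conj_I]
  push_cast
  ring

lemma q_neg_left (a b : X) : q (-a) b = - q a b := by
  have h1 : ‖-a + b‖ = ‖a - b‖ := by rw [← norm_neg]; congr 1; abel
  have h2 : ‖-a - b‖ = ‖a + b‖ := by rw [← norm_neg]; congr 1; abel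
  have h3 : ‖-a + Complex.I • b‖ = ‖a - Complex.I • b‖ := by
    rw [← norm_neg]; congr 1; abel
  have h4 : ‖-a - Complex.I • b‖ = ‖a + Complex.I • b‖ := by
    rw [← norm_neg]; congr 1; abel
  simp only [q, h1, h2, h3, h4]
  push_cast
  ring

lemma q_I_left (a b : X) : q (Complex.I • a) b = Complex.I * q a b := by
  have e1 : Complex.I • (a - Complex.I • b) = Complex.I • a + b := by
    rw [smul_sub, smul_smul, Complex.I_mul_I, neg_one_smul, sub_neg_eq_add]
  have h1 : ‖Complex.I • a + b‖ = ‖a - Complex.I • b‖ := by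
    rw [← e1, norm_I_smul]
  have e2 : Complex.I • (a + Complex.I • b) = Complex.I • a - b := by
    rw [smul_add, smul_smul, Complex.I_mul_I, neg_one_smul]; abel
  have h2 : ‖Complex.I • a - b‖ = ‖a + Complex.I • b‖ := by
    rw [← e2, norm_I_smul]
  have h3 : ‖Complex.I • a + Complex.I • b‖ = ‖a + b‖ := by
    rw [← smul_add, norm_I_smul]
  have h4 : ‖Complex.I • a - Complex.I • b‖ = ‖a - b‖ := by
    rw [← smul_sub, norm_I_smul]
  simp only [q, h1, h2, h3, h4]
  push_cast
  linear_combination ((((‖a - Complex.I • b‖ : ℝ) : ℂ) ^ 2 - ((‖a + Complex.I • b‖ : ℝ) : ℂ) ^ 2) / 4) *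
    Complex.I_sq

lemma q_self (a : X) : q a a = ((‖a‖ ^ 2 : ℝ) : ℂ) := by
  have h1 : ‖a + a‖ = 2 * ‖a‖ := by
    rw [← two_smul ℝ a, norm_smul]; simp
  have h2 : ‖a - a‖ = 0 := by simp
  have e3 : Complex.I • (a - Complex.I • a) = a + Complex.I • a := by
    rw [smul_sub, smul_smul, Complex.I_mul_I, neg_one_smul, sub_neg_eq_add]; abel
  have h3 : ‖a + Complex.I • a‖ = ‖a - Complex.I • a‖ := by
    rw [← e3, norm_I_smul]
  simp only [q, h1, h2, h3, sub_self, norm_zero]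
  push_cast
  ring

lemma norm_nu {x : X} (hx : x ≠ 0) : ‖nu x‖ = 1 := by
  have h : ‖x‖ ≠ 0 := norm_ne_zero_iff.mpr hx
  rw [nu, norm_smul, Complex.norm_real, Real.norm_eq_abs, abs_inv, abs_norm,
    inv_mul_cancel₀ h]

lemma nu_smul {x : X} (hx : x ≠ 0) (c : ℂ) (hc : c ≠ 0) :
    nu (c • x) = (c / ((‖c‖ : ℝ) : ℂ)) • nu x := by
  have hx' : ‖x‖ ≠ 0 := norm_ne_zero_iff.mpr hx
  have hc' : (‖c‖ : ℝ) ≠ 0 := norm_ne_zero_iff.mpr hc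
  rw [nu, nu, norm_smul, smul_smul, smul_smul]
  congr 1
  push_cast [mul_inv]
  field_simp

lemma cprod_self (x : X) : cprod x x = ((‖x‖ ^ 2 : ℝ) : ℂ) := by
  by_cases hx : x = 0
  · simp [cprod, hx]
  · rw [cprod_eq hx hx, q_self, norm_nu hx]
    push_cast
    ring

lemma cprod_smul {x y : X} (hx : x ≠ 0) (hy : y ≠ 0) (c : ℂ) (hc : c ≠ 0) :
    cprod (c • x) y = ((‖c‖ : ℝ) : ℂ) * ((‖x‖ * ‖y‖ : ℝ) : ℂ) *
      q ((c / ((‖c‖ : ℝ) : ℂ)) • nu x) (nu y) := by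
  have hcx : c • x ≠ 0 := smul_ne_zero hc hx
  rw [cprod_eq hcx hy, nu_smul hx c hc, norm_smul]
  push_cast
  ring

end CprodAux

namespace CprodAux

variable {X : Type*} [NormedAddCommGroup X] [NormedSpace ℂ X]

lemma cprod_zero_left (y : X) : cprod (0 : X) y = 0 := by simp [cprod]

lemma cprod_zero_right (x : X) : cprod x (0 : X) = 0 := by simp [cprod]

end CprodAux


open CprodAux

/-- In any complex normed space the product `⟨·|·⟩` satisfies conjugate symmetry,
positive definiteness, homogeneity for real and pure imaginary scalars, and `⟨x|x⟩ = ‖x‖²`. -/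
theorem stmt0 {X : Type*} [NormedAddCommGroup X] [NormedSpace ℂ X] :
    (∀ x y : X, cprod x y = starRingEnd ℂ (cprod y x)) ∧
    (∀ x : X, (cprod x x).im = 0 ∧ 0 ≤ (cprod x x).re ∧ (cprod x x = 0 → x = 0)) ∧
    (∀ (r : ℝ) (x y : X), cprod ((r : ℂ) • x) y = (r : ℂ) * cprod x y) ∧
    (∀ (r : ℝ) (x y : X),
      cprod (((r : ℂ) * Complex.I) • x) y = (r : ℂ) * Complex.I * cprod x y) ∧
    (∀ x : X, ‖x‖ = Real.sqrt (cprod x x).re ∧ cprod x x = ((‖x‖ ^ 2 : ℝ) : ℂ)) := by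
  refine ⟨?_, ?_, ?_, ?_, ?_⟩
  · -- conjugate symmetry
    intro x y
    by_cases hx : x = 0
    · subst hx; rw [cprod_zero_left, cprod_zero_right, map_zero]
    by_cases hy : y = 0
    · subst hy; rw [cprod_zero_left, cprod_zero_right, map_zero]
    rw [cprod_eq hx hy, cprod_eq hy hx, q_conj (nu y) (nu x), map_mul, Complex.conj_ofReal,
      mul_comm ‖y‖ ‖x‖]
  · -- positive definiteness
    intro x
    have h := cprod_self x
    refine ⟨by rw [h, Complex.ofReal_im], by rw [h, Complex.ofReal_re]; positivity,
      fun h0 => ?_⟩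
    rw [h, Complex.ofReal_eq_zero] at h0
    simpa using pow_eq_zero_iff (n := 2) (by norm_num) |>.mp h0
  · -- real homogeneity
    intro r x y
    by_cases hx : x = 0
    · subst hx; simp [cprod_zero_left]
    by_cases hy : y = 0
    · subst hy; simp [cprod_zero_right]
    by_cases hr : r = 0
    · subst hr; simp [cprod_zero_left]
    have hc : ((r : ℝ) : ℂ) ≠ 0 := Complex.ofReal_ne_zero.mpr hr
    rw [cprod_smul hx hy _ hc, cprod_eq hx hy, Complex.norm_real, Real.norm_eq_abs]
    rcases Ne.lt_or_gt hr with h | h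
    · rw [abs_of_neg h]
      have hne : (((-r : ℝ)) : ℂ) ≠ 0 := Complex.ofReal_ne_zero.mpr (neg_ne_zero.mpr hr)
      have hco : ((r : ℂ) / (((-r : ℝ)) : ℂ)) = -1 := by
        rw [div_eq_iff hne]; push_cast; ring
      rw [hco, neg_one_smul, q_neg_left]
      push_cast
      ring
    · rw [abs_of_pos h]
      have hco : ((r : ℂ) / ((r : ℝ) : ℂ)) = 1 := div_self hc
      rw [hco, one_smul]
      push_cast
      ring
  · -- imaginary homogeneity
    intro r x y
    by_cases hx : x = 0
    · subst hx; simp [cprod_zero_left]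
    by_cases hy : y = 0
    · subst hy; simp [cprod_zero_right]
    by_cases hr : r = 0
    · subst hr; simp [cprod_zero_left]
    have hcr : ((r : ℝ) : ℂ) ≠ 0 := Complex.ofReal_ne_zero.mpr hr
    have hc : ((r : ℂ) * Complex.I) ≠ 0 :=
      mul_ne_zero (Complex.ofReal_ne_zero.mpr hr) Complex.I_ne_zero
    have hnorm : ‖(r : ℂ) * Complex.I‖ = |r| := by
      rw [norm_mul, Complex.norm_I, Complex.norm_real, Real.norm_eq_abs, mul_one]
    rw [cprod_smul hx hy _ hc, cprod_eq hx hy, hnorm]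
    rcases Ne.lt_or_gt hr with h | h
    · rw [abs_of_neg h]
      have hne : (((-r : ℝ)) : ℂ) ≠ 0 := Complex.ofReal_ne_zero.mpr (neg_ne_zero.mpr hr)
      have hco : (((r : ℂ) * Complex.I) / (((-r : ℝ)) : ℂ)) = -Complex.I := by
        rw [div_eq_iff hne]; push_cast; ring
      rw [hco, neg_smul, q_neg_left, q_I_left]
      push_cast
      ring
    · rw [abs_of_pos h]
      have hco : (((r : ℂ) * Complex.I) / ((r : ℝ) : ℂ)) = Complex.I := by
        rw [div_eq_iff hcr]; ring
      rw [hco, q_I_left]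
      push_cast
      ring
  · -- norm formula
    intro x
    have h := cprod_self x
    refine ⟨?_, h⟩
    rw [h, Complex.ofReal_re, Real.sqrt_sq (norm_nonneg x)]
end

section
/- In any complex normed space (X, ‖·‖), for all x, y ∈ X one has |Re(⟨x|y⟩)| ≤ ‖x‖·‖y‖ and |Im(⟨x|y⟩)| ≤ ‖x‖·‖y‖; consequently |⟨x|y⟩| ≤ √2·‖x‖·‖y‖. -/
theorem abs_norm_add_sq_sub_norm_sub_sq_le {E : Type*} [SeminormedAddCommGroup E] (u v : E) :
    |‖u + v‖ ^ 2 - ‖u - v‖ ^ 2| ≤ 4 * (‖u‖ * ‖v‖) := by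
  have key : ∀ w : E, ‖u + w‖ ^ 2 - ‖u - w‖ ^ 2 ≤ 4 * (‖u‖ * ‖w‖) := fun w => by
    have h₁ : ‖u + w‖ ≤ ‖u‖ + ‖w‖ := norm_add_le u w
    have h₂ : |‖u‖ - ‖w‖| ≤ ‖u - w‖ := abs_norm_sub_norm_le u w
    nlinarith [abs_nonneg (‖u‖ - ‖w‖), sq_abs (‖u‖ - ‖w‖), norm_nonneg (u + w)]
  have key_neg := key (-v)
  rw [sub_neg_eq_add, ← sub_eq_add_neg, norm_neg] at key_neg
  rw [abs_le]
  constructor <;> linarith [key v]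

theorem abs_norm_add_sq_sub_norm_sub_sq_le_four {E : Type*} [SeminormedAddCommGroup E] {u v : E}
    (hu : ‖u‖ = 1) (hv : ‖v‖ = 1) : |‖u + v‖ ^ 2 - ‖u - v‖ ^ 2| ≤ 4 := by
  simpa [hu, hv] using abs_norm_add_sq_sub_norm_sub_sq_le u v

theorem Complex.abs_re_im_mul_quarter_le {r a b : ℝ} (hr : 0 ≤ r) (ha : |a| ≤ 4) (hb : |b| ≤ 4) :
    |((r : ℂ) * (1 / 4) * (a + I * b)).re| ≤ r ∧ |((r : ℂ) * (1 / 4) * (a + I * b)).im| ≤ r := by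
  have hre : ((r : ℂ) * (1 / 4) * (a + I * b)).re = r / 4 * a := by simp [div_eq_mul_inv]
  have him : ((r : ℂ) * (1 / 4) * (a + I * b)).im = r / 4 * b := by simp [div_eq_mul_inv]
  rw [hre, him, abs_mul, abs_mul, abs_of_nonneg (by positivity : 0 ≤ r / 4)]
  constructor <;> nlinarith

theorem norm_ofReal_inv_norm_smul {X : Type*} [NormedAddCommGroup X] [NormedSpace ℂ X] {x : X}
    (hx : x ≠ 0) : ‖((‖x‖⁻¹ : ℝ) : ℂ) • x‖ = 1 := by
  simpa using norm_smul_inv_norm (𝕜 := ℂ) hx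

/-- `|Re⟨x|y⟩| ≤ ‖x‖·‖y‖`, `|Im⟨x|y⟩| ≤ ‖x‖·‖y‖`, hence `|⟨x|y⟩| ≤ √2·‖x‖·‖y‖`. -/
theorem stmt1 {X : Type*} [NormedAddCommGroup X] [NormedSpace ℂ X] (x y : X) :
    |(cprod x y).re| ≤ ‖x‖ * ‖y‖ ∧ |(cprod x y).im| ≤ ‖x‖ * ‖y‖ ∧
      ‖cprod x y‖ ≤ Real.sqrt 2 * (‖x‖ * ‖y‖) := by
  have hxy : 0 ≤ ‖x‖ * ‖y‖ := by positivity
  have parts : |(cprod x y).re| ≤ ‖x‖ * ‖y‖ ∧ |(cprod x y).im| ≤ ‖x‖ * ‖y‖ := by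
    by_cases h : x = 0 ∨ y = 0
    · simp [cprod, h, hxy]
    obtain ⟨hx, hy⟩ := not_or.mp h
    have hu := norm_ofReal_inv_norm_smul hx
    have hv := norm_ofReal_inv_norm_smul hy
    have hIv : ‖Complex.I • ((‖y‖⁻¹ : ℝ) : ℂ) • y‖ = 1 := by
      rw [norm_smul, hv, Complex.norm_I, one_mul]
    rw [cprod, if_neg h]
    exact Complex.abs_re_im_mul_quarter_le hxy (abs_norm_add_sq_sub_norm_sub_sq_le_four hu hv)
      (abs_norm_add_sq_sub_norm_sub_sq_le_four hu hIv)
  refine ⟨parts.1, parts.2, (Complex.norm_le_sqrt_two_mul_max _).trans ?_⟩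
  gcongr
  exact max_le parts.1 parts.2
end

section
/- For every real number r > 0, the set M_r ⊆ ℂ² is convex, balanced and absorbent, and for every v ≠ 0 there is ω > 0 with ω'·v ∉ M_r for all ω' ≥ ω (M_r is locally bounded); consequently the Minkowski functional ‖v‖_r := inf{η > 0 : η⁻¹·v ∈ M_r} (with ‖0‖_r := 0) is a norm on the complex vector space ℂ². -/
/-- The four-element set `S_r = {(1,0), (0,1), (r,−r), (r,−i·r)} ⊆ ℂ²`. -/
def Sr (r : ℝ) : Set (ℂ × ℂ) :=
  {((1 : ℂ), (0 : ℂ)), ((0 : ℂ), (1 : ℂ)), (((r : ℝ) : ℂ), -((r : ℝ) : ℂ)),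
    (((r : ℝ) : ℂ), -(Complex.I * ((r : ℝ) : ℂ)))}

/-- `twist S = {e^{iφ}·x : φ ∈ ℝ, x ∈ S}`. -/
def twist (S : Set (ℂ × ℂ)) : Set (ℂ × ℂ) :=
  {x | ∃ (φ : ℝ) (y : ℂ × ℂ), y ∈ S ∧ x = Complex.exp (Complex.I * (φ : ℂ)) • y}

/-- `M_r = conv(twist(S_r))`, the convex hull taken over `ℝ`. -/
noncomputable def Mr (r : ℝ) : Set (ℂ × ℂ) := convexHull ℝ (twist (Sr r))

/-!
Rotations `x ↦ e^{iφ} • x` are `ℝ`-linear and preserve `twist S`, so they preserve its convex hull;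
together with `0 = ½ y + ½ e^{iπ} y` this makes the hull balanced over `ℂ`. `M_r` contains both
unit vectors, hence, being convex and balanced, the sup-norm ball of radius `1/2`, so it is
absorbent; and it is the hull of the rotations of a finite set, so it is bounded. The gauge of a
convex, balanced, absorbent, bounded set is a norm.
-/

open Set Complex Filter Topology Bornology

section Twist

variable {S : Set (ℂ × ℂ)}

lemma exp_smul_mem_twist {y : ℂ × ℂ} (hy : y ∈ S) (φ : ℝ) : exp (I * φ) • y ∈ twist S :=
  ⟨φ, y, hy, rfl⟩

lemma subset_twist : S ⊆ twist S := fun y hy => by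
  simpa using exp_smul_mem_twist hy 0

lemma exp_smul_mem_twist_of_mem {x : ℂ × ℂ} (hx : x ∈ twist S) (φ : ℝ) :
    exp (I * φ) • x ∈ twist S := by
  obtain ⟨ψ, y, hy, rfl⟩ := hx
  rw [smul_smul, ← exp_add, ← mul_add, ← ofReal_add]
  exact exp_smul_mem_twist hy _

lemma exp_smul_mem_convexHull_twist {x : ℂ × ℂ} (hx : x ∈ convexHull ℝ (twist S)) (φ : ℝ) :
    exp (I * φ) • x ∈ convexHull ℝ (twist S) := by
  let rot : (ℂ × ℂ) →ₗ[ℝ] ℂ × ℂ := DistribSMul.toLinearMap ℝ (ℂ × ℂ) (exp (I * φ))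
  have hrot : rot x ∈ convexHull ℝ (rot '' twist S) :=
    rot.image_convexHull (twist S) ▸ mem_image_of_mem rot hx
  have hsub : rot '' twist S ⊆ twist S := by
    rintro _ ⟨y, hy, rfl⟩
    exact exp_smul_mem_twist_of_mem hy φ
  exact convexHull_mono hsub hrot

lemma zero_mem_convexHull_twist (hS : S.Nonempty) : (0 : ℂ × ℂ) ∈ convexHull ℝ (twist S) := by
  obtain ⟨y, hy⟩ := hS
  have hneg : -y ∈ twist S := by
    simpa [mul_comm I, exp_pi_mul_I] using exp_smul_mem_twist hy Real.pi
  refine segment_subset_convexHull (subset_twist hy) hneg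
    ⟨1 / 2, 1 / 2, by norm_num, by norm_num, by norm_num, ?_⟩
  rw [smul_neg, add_neg_cancel]

lemma balanced_convexHull_twist (hS : S.Nonempty) : Balanced ℂ (convexHull ℝ (twist S)) := by
  rintro a ha _ ⟨x, hx, rfl⟩
  have hpolar : a = (‖a‖ : ℝ) • exp (I * (arg a : ℝ)) := by
    rw [real_smul, mul_comm I, norm_mul_exp_arg_mul_I]
  change a • x ∈ _
  rw [hpolar, smul_assoc]
  exact ((convex_convexHull ℝ _).starConvex (zero_mem_convexHull_twist hS)).smul_mem
    (exp_smul_mem_convexHull_twist hx _) (norm_nonneg a) ha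

lemma Bornology.IsBounded.twist (hS : IsBounded S) : IsBounded (twist S) := by
  obtain ⟨C, hC⟩ := isBounded_iff_forall_norm_le.1 hS
  refine isBounded_iff_forall_norm_le.2 ⟨C, ?_⟩
  rintro _ ⟨φ, y, hy, rfl⟩
  rw [norm_smul, mul_comm I, norm_exp_ofReal_mul_I, one_mul]
  exact hC y hy

end Twist

lemma mem_nhds_zero_of_convex_of_balanced {s : Set (ℂ × ℂ)} (hconv : Convex ℝ s)
    (hbal : Balanced ℂ s) (h₁ : ((1 : ℂ), (0 : ℂ)) ∈ s) (h₂ : ((0 : ℂ), (1 : ℂ)) ∈ s) :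
    s ∈ 𝓝 0 := by
  refine Filter.mem_of_superset (Metric.ball_mem_nhds 0 (by norm_num : (0 : ℝ) < 1 / 2)) ?_
  -- `(a, b) = ½ • (2a) • (1, 0) + ½ • (2b) • (0, 1)`
  rintro ⟨a, b⟩ hab
  rw [mem_ball_zero_iff, Prod.norm_def, max_lt_iff] at hab
  have ha : (2 * a) • ((1 : ℂ), (0 : ℂ)) ∈ s :=
    hbal.smul_mem (by rw [norm_mul, Complex.norm_two]; linarith [hab.1]) h₁
  have hb : (2 * b) • ((0 : ℂ), (1 : ℂ)) ∈ s :=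
    hbal.smul_mem (by rw [norm_mul, Complex.norm_two]; linarith [hab.2]) h₂
  convert hconv ha hb (by norm_num : (0 : ℝ) ≤ 1 / 2) (by norm_num : (0 : ℝ) ≤ 1 / 2)
    (by norm_num) using 1
  ext <;> simp

lemma Absorbent.exists_pos_smul_mem {E : Type*} [AddCommGroup E] [Module ℝ E] {s : Set E}
    (hs : Absorbent ℝ s) (v : E) : ∃ ε : ℝ, 0 < ε ∧ ε • v ∈ s := by
  obtain ⟨ε, hε, hpos⟩ := (((hs.eventually_nhdsNE_zero v).filter_mono (nhdsGT_le_nhdsNE 0)).and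
    self_mem_nhdsWithin).exists
  exact ⟨ε, hpos, hε⟩

lemma Bornology.IsBounded.exists_forall_ge_smul_notMem {E : Type*} [NormedAddCommGroup E]
    [NormedSpace ℝ E] {s : Set E} (hs : IsBounded s) {v : E} (hv : v ≠ 0) :
    ∃ ω : ℝ, 0 < ω ∧ ∀ ω' : ℝ, ω ≤ ω' → ω' • v ∉ s := by
  have hlim : Tendsto (fun t : ℝ => t • v) atTop (cobounded E) := by
    rw [← tendsto_norm_atTop_iff_cobounded]
    simp only [norm_smul]
    exact (tendsto_norm_atTop_atTop.comp tendsto_id).atTop_mul_const (norm_pos_iff.2 hv)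
  obtain ⟨ω, hω⟩ :=
    ((hlim.eventually (isBounded_def.1 hs)).and (eventually_gt_atTop 0)).exists_forall_of_atTop
  exact ⟨ω, (hω ω le_rfl).2, fun ω' hω' => (hω ω' hω').1⟩

lemma finite_Sr (r : ℝ) : (Sr r).Finite := by
  unfold Sr
  exact toFinite _

lemma isBounded_Mr (r : ℝ) : IsBounded (Mr r) :=
  isBounded_convexHull.2 (finite_Sr r).isBounded.twist

lemma balanced_Mr (r : ℝ) : Balanced ℂ (Mr r) :=
  balanced_convexHull_twist (insert_nonempty _ _)

lemma Mr_mem_nhds_zero (r : ℝ) : Mr r ∈ 𝓝 0 :=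
  mem_nhds_zero_of_convex_of_balanced (convex_convexHull ℝ _) (balanced_Mr r)
    (subset_convexHull ℝ _ (subset_twist (by simp [Sr])))
    (subset_convexHull ℝ _ (subset_twist (by simp [Sr])))

theorem stmt5_general (r : ℝ) :
    Convex ℝ (Mr r) ∧
    (∀ x ∈ Mr r, ∀ φ : ℝ, Complex.exp (Complex.I * (φ : ℂ)) • x ∈ Mr r) ∧
    (∀ v : ℂ × ℂ, v ≠ 0 → ∃ ε : ℝ, 0 < ε ∧ ε • v ∈ Mr r) ∧
    (∀ v : ℂ × ℂ, v ≠ 0 → ∃ ω : ℝ, 0 < ω ∧ ∀ ω' : ℝ, ω ≤ ω' → ω' • v ∉ Mr r) ∧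
    gauge (Mr r) 0 = 0 ∧
    (∀ v : ℂ × ℂ, gauge (Mr r) v = 0 ↔ v = 0) ∧
    (∀ (z : ℂ) (v : ℂ × ℂ), gauge (Mr r) (z • v) = ‖z‖ * gauge (Mr r) v) ∧
    (∀ v w : ℂ × ℂ, gauge (Mr r) (v + w) ≤ gauge (Mr r) v + gauge (Mr r) w) := by
  have hconv : Convex ℝ (Mr r) := convex_convexHull ℝ _
  have habs : Absorbent ℝ (Mr r) := absorbent_nhds_zero (Mr_mem_nhds_zero r)
  have hbdd : IsVonNBounded ℝ (Mr r) := (NormedSpace.isVonNBounded_iff ℝ).2 (isBounded_Mr r)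
  exact ⟨hconv, fun x hx φ => exp_smul_mem_convexHull_twist hx φ,
    fun v _ => habs.exists_pos_smul_mem v,
    fun v hv => (isBounded_Mr r).exists_forall_ge_smul_notMem hv,
    gauge_zero, fun v => gauge_eq_zero habs hbdd, gauge_smul (balanced_Mr r),
    gauge_add_le hconv habs⟩

/-- for `r > 0` the set `M_r` is convex, balanced, absorbent and locally bounded,
and its Minkowski functional (gauge) is a norm on the complex vector space `ℂ²`. -/
theorem stmt5 (r : ℝ) (hr : 0 < r) :
    Convex ℝ (Mr r) ∧
    (∀ x ∈ Mr r, ∀ φ : ℝ, Complex.exp (Complex.I * (φ : ℂ)) • x ∈ Mr r) ∧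
    (∀ v : ℂ × ℂ, v ≠ 0 → ∃ ε : ℝ, 0 < ε ∧ ε • v ∈ Mr r) ∧
    (∀ v : ℂ × ℂ, v ≠ 0 → ∃ ω : ℝ, 0 < ω ∧ ∀ ω' : ℝ, ω ≤ ω' → ω' • v ∉ Mr r) ∧
    gauge (Mr r) 0 = 0 ∧
    (∀ v : ℂ × ℂ, gauge (Mr r) v = 0 ↔ v = 0) ∧
    (∀ (z : ℂ) (v : ℂ × ℂ), gauge (Mr r) (z • v) = ‖z‖ * gauge (Mr r) v) ∧
    (∀ v w : ℂ × ℂ, gauge (Mr r) (v + w) ≤ gauge (Mr r) v + gauge (Mr r) w) :=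
  stmt5_general r
end

section
/- In any complex normed space (X, ‖·‖), for every x ∈ X and every real φ one has ⟨e^{i·φ}·x | x⟩ = e^{i·φ}·⟨x|x⟩ = e^{i·φ}·‖x‖². -/
open Complex

theorem Complex.polarization_one_I (c : ℂ) :
    ((‖c + 1‖ ^ 2 - ‖c - 1‖ ^ 2 : ℝ) : ℂ) + I * ((‖c + I‖ ^ 2 - ‖c - I‖ ^ 2 : ℝ) : ℂ) = 4 * c := by
  simp only [Complex.sq_norm]
  apply Complex.ext <;> simp [normSq_apply] <;> ring

theorem cprod_smul_self {X : Type*} [NormedAddCommGroup X] [NormedSpace ℂ X] (e : ℂ) (x : X) :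
    cprod (e • x) x = e * ((‖x‖ ^ 2 : ℝ) : ℂ) := by
  rcases eq_or_ne e 0 with rfl | he
  · simp [cprod]
  rcases eq_or_ne x 0 with rfl | hx
  · simp [cprod]
  set u : X := ((‖x‖⁻¹ : ℝ) : ℂ) • x with hu_def
  have hu : ‖u‖ = 1 := by
    rw [hu_def, norm_smul, Complex.norm_real, norm_inv, norm_norm,
      inv_mul_cancel₀ (norm_ne_zero_iff.2 hx)]
  set c : ℂ := e / (‖e‖ : ℂ)
  have hnormalize : ((‖e • x‖⁻¹ : ℝ) : ℂ) • (e • x) = c • u := by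
    rw [hu_def, smul_smul, smul_smul, norm_smul]
    congr 1
    push_cast
    ring
  have hce : (‖e‖ : ℂ) * c = e := mul_div_cancel₀ _ (by exact_mod_cast norm_ne_zero_iff.2 he)
  unfold cprod
  rw [if_neg (by simp [he, hx]), hnormalize, ← hu_def]
  set f := LinearIsometry.toSpanSingleton ℂ X hu
  have hf : ∀ a : ℂ, a • u = f a := fun a => rfl
  rw [hf c, hf I, show u = f 1 by simp [f]]
  simp only [← map_add, ← map_sub, LinearIsometry.norm_map]
  rw [Complex.polarization_one_I, norm_smul]
  push_cast
  linear_combination (‖x‖ : ℂ) ^ 2 * hce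

/-- `⟨e^{iφ}·x | x⟩ = e^{iφ}·⟨x|x⟩ = e^{iφ}·‖x‖²` for every `x` and real `φ`. -/
theorem stmt9 {X : Type*} [NormedAddCommGroup X] [NormedSpace ℂ X] (x : X) (φ : ℝ) :
    cprod (Complex.exp (Complex.I * (φ : ℂ)) • x) x
        = Complex.exp (Complex.I * (φ : ℂ)) * cprod x x ∧
    cprod (Complex.exp (Complex.I * (φ : ℂ)) • x) x
        = Complex.exp (Complex.I * (φ : ℂ)) * ((‖x‖ ^ 2 : ℝ) : ℂ) := by
  have hself : cprod x x = ((‖x‖ ^ 2 : ℝ) : ℂ) := by simpa using cprod_smul_self 1 x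
  rw [hself, and_self]
  exact cprod_smul_self _ x
end

section
/- Let X be a complex inner product space with inner product ⟪·|·⟫ and let n be a natural number. Then the following are equivalent: (1) there exists an orthonormal system {x₁, …, xₙ} ⊆ X of n vectors; (2) there exist n vectors v₁, …, vₙ ∈ X that are linearly independent over ℝ and such that all pairwise inner products ⟪v_j|v_k⟫ (1 ≤ j, k ≤ n) are real numbers. -/
/-!
An orthonormal system is `ℂ`-linearly independent, hence `ℝ`-linearly independent, and its Gram
matrix is the identity. Conversely, real Gram entries make `⟪u, w⟫` real for all `u, w` in the
real span of the `vⱼ`; then `u + I • w = 0` forces `⟪u, u⟫ = -I * ⟪u, w⟫ ∈ I • ℝ`, so `u = 0` and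
`w = 0`. Thus `ℝ`-independence upgrades to `ℂ`-independence, and Gram–Schmidt produces an
orthonormal system of the same size.
-/

open Complex

section

variable {X : Type*} [NormedAddCommGroup X] [InnerProductSpace ℂ X]

theorem im_inner_sum_smul_eq_zero {ι : Type*} [Fintype ι] {v : ι → X}
    (hv : ∀ j k, (inner ℂ (v j) (v k)).im = 0) (a b : ι → ℝ) :
    (inner ℂ (∑ j, a j • v j) (∑ k, b k • v k)).im = 0 := by
  simp [sum_inner, inner_smul_left_eq_smul, inner_smul_right_eq_smul, hv]

theorem eq_zero_of_add_I_smul_eq_zero {u w : X} (huw : (inner ℂ u w).im = 0)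
    (h : u + I • w = 0) : u = 0 := by
  have hu : u = -(I • w) := eq_neg_of_add_eq_zero_left h
  have hinner : inner ℂ u u = -(I * inner ℂ u w) := by
    nth_rewrite 2 [hu]
    rw [inner_neg_right, inner_smul_right]
  refine (re_inner_self_nonpos (𝕜 := ℂ)).mp (le_of_eq ?_)
  rw [hinner]
  simp [huw]

theorem LinearIndependent.complex_of_im_inner_eq_zero {ι : Type*} [Fintype ι] {v : ι → X}
    (hli : LinearIndependent ℝ v) (hv : ∀ j k, (inner ℂ (v j) (v k)).im = 0) :
    LinearIndependent ℂ v := by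
  rw [Fintype.linearIndependent_iff] at hli ⊢
  intro g hg
  set u := ∑ j, (g j).re • v j
  set w := ∑ j, (g j).im • v j
  have hsplit : u + I • w = 0 := by
    rw [← hg]
    simp only [u, w, Finset.smul_sum, ← Finset.sum_add_distrib]
    refine Finset.sum_congr rfl fun j _ => ?_
    conv_rhs => rw [← re_add_im (g j)]
    rw [add_smul, mul_comm, mul_smul, ← Complex.coe_smul, ← Complex.coe_smul]
  have hu : u = 0 := eq_zero_of_add_I_smul_eq_zero (im_inner_sum_smul_eq_zero hv _ _) hsplit
  have hw : w = 0 := by simpa [hu] using hsplit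
  exact fun j => Complex.ext (hli _ hu j) (hli _ hw j)

end

/-- in a complex inner product space, there is an orthonormal system of `n` vectors
iff there are `n` vectors, linearly independent over `ℝ`, all of whose pairwise inner products are
real. -/
theorem stmt17 {X : Type*} [NormedAddCommGroup X] [InnerProductSpace ℂ X] (n : ℕ) :
    (∃ x : Fin n → X, Orthonormal ℂ x) ↔
    (∃ v : Fin n → X, LinearIndependent ℝ v ∧
      ∀ j k : Fin n, ((inner ℂ (v j) (v k) : ℂ)).im = 0) := by
  constructor
  · rintro ⟨x, hx⟩
    refine ⟨x, hx.linearIndependent.restrict_scalars' ℝ, fun j k => ?_⟩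
    rw [orthonormal_iff_ite.mp hx j k]
    split_ifs <;> simp
  · rintro ⟨v, hli, hv⟩
    exact ⟨InnerProductSpace.gramSchmidtNormed ℂ v,
      InnerProductSpace.gramSchmidtNormed_orthonormal (hli.complex_of_im_inner_eq_zero hv)⟩
end
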